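/- Let H(t) ∈ ℂ[[t]] be an even formal power series (all coefficients in odd degrees vanish) with constant term 1. Then H is 2-algebraically rigid if and only if there exists a ∈ ℂ such that H = D_{a,0}, i.e. H(t)·(exp(at) − exp(−at)) = at·(exp(at) + exp(−at)) (formally H(t) = at·coth(at)), where for a = 0 this means H = 1. -/

import Mathlib

/-!
For even `H`, `F_H` is odd, so `S_H(0, 1, 2) = t⁻² (H(t) H(2t) - H(t)²)`. Rigidity therefore kills
every coefficient of `H(t) H(2t) - H(t)²` except that of `t²`, and the resulting recursion
`(2ⁿ - 1) h_n = -∑_{0 < i < n} (2^{n-i} - 1) h_i h_{n-i}` determines `H` from `h_2`.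
Conversely, if `H(t) = a t coth (a t)` then `F_H(p t) = a coth (a p t)`, and the addition formula
for `coth` makes every `S_H(w_0, w_1, w_2)` equal to the constant `a²`. Since `h_2 = a² / 3`
for `D_{a,0}`, choosing `a² = 3 h_2` gives a rigid `D_{a,0}` with the same `h_2`, which is
therefore `H`.
-/

noncomputable section

namespace RigidGenus

variable {R : Type*} [Field R]

/-- Termwise substitution `t ↦ w·t` on Laurent series: the coefficient of `t^k`
is multiplied by `w^k`. -/
def zscale (w : R) (f : LaurentSeries R) : LaurentSeries R where
  coeff k := w ^ k * f.coeff k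
  isPWO_support' := f.isPWO_support'.mono (fun k hk => by
    simp only [Function.mem_support, ne_eq] at hk ⊢
    exact fun h => hk (by rw [h, mul_zero]))

/-- Termwise derivative of a Laurent series: `(∑ f_k t^k)' = ∑ k f_k t^(k-1)`. -/
def lderiv (f : LaurentSeries R) : LaurentSeries R where
  coeff k := ((k + 1 : ℤ) : R) * f.coeff (k + 1)
  isPWO_support' := by
    have himg : ((fun k : ℤ => k - 1) '' (Function.support f.coeff)).IsPWO :=
      f.isPWO_support'.image_of_monotone (fun a b h => sub_le_sub_right h 1)
    refine himg.mono (fun k hk => ?_)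
    simp only [Function.mem_support, ne_eq] at hk
    exact ⟨k + 1, fun h => hk (by rw [h, mul_zero]), by ring⟩

/-- `F_H = H(t)/t`, as a formal Laurent series. -/
def FH (H : PowerSeries R) : LaurentSeries R :=
  HahnSeries.single (-1 : ℤ) (1 : R) * HahnSeries.ofPowerSeries ℤ R H

/-- `S_H(w_0,…,w_n;t) = ∑_i ∏_{j ≠ i} F_H((w_j - w_i) t)`. -/
def SH (H : PowerSeries R) {n : ℕ} (w : Fin (n + 1) → ℤ) : LaurentSeries R :=
  ∑ i : Fin (n + 1), ∏ j ∈ Finset.univ.erase i, zscale ((w j - w i : ℤ) : R) (FH H)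

/-- `H` is `n`-algebraically rigid: for all `1 ≤ m ≤ n` and pairwise distinct
integers `w_0, …, w_m`, the Laurent series `S_H(w_0,…,w_m;t)` is constant. -/
def AlgRigid (H : PowerSeries R) (n : ℕ) : Prop :=
  ∀ m : ℕ, 1 ≤ m → m ≤ n → ∀ w : Fin (m + 1) → ℤ, Function.Injective w →
    ∀ k : ℤ, k ≠ 0 → (SH H w).coeff k = 0

/-- The formal exponential series `exp (a t)`. -/
def expS (a : R) : PowerSeries R := PowerSeries.mk fun n => a ^ n / n.factorial

/-- The formal sine series `sin (a t)`. -/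
def sinS (a : R) : PowerSeries R :=
  PowerSeries.mk fun n => if n % 2 = 1 then (-1 : R) ^ (n / 2) * a ^ n / n.factorial else 0

/-- The formal cosine series `cos (a t)`. -/
def cosS (a : R) : PowerSeries R :=
  PowerSeries.mk fun n => if n % 2 = 0 then (-1 : R) ^ (n / 2) * a ^ n / n.factorial else 0

/-- `H = D_{a,b}`, the generalized Todd series `t(a·coth(at)+b)`: for `a ≠ 0` it is
characterized by `D_{a,b}(t)·(e^{at} - e^{-at}) = t·(a(e^{at}+e^{-at}) + b(e^{at}-e^{-at}))`,
and `D_{0,b}(t) = 1 + bt`. -/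
def IsDab (a b : R) (H : PowerSeries R) : Prop :=
  (a ≠ 0 ∧ H * (expS a - expS (-a)) =
      PowerSeries.X * (PowerSeries.C a * (expS a + expS (-a)) +
        PowerSeries.C b * (expS a - expS (-a)))) ∨
  (a = 0 ∧ H = 1 + PowerSeries.C b * PowerSeries.X)

/-- `H = G_{a,b}`, the series `t(a·cot(at)+b)`: for `a ≠ 0` it is characterized by
`G_{a,b}(t)·sin(at) = t·(a·cos(at) + b·sin(at))`, and `G_{0,b}(t) = 1 + bt`. -/
def IsGab (a b : R) (H : PowerSeries R) : Prop :=
  (a ≠ 0 ∧ H * sinS a =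
      PowerSeries.X * (PowerSeries.C a * cosS a + PowerSeries.C b * sinS a)) ∨
  (a = 0 ∧ H = 1 + PowerSeries.C b * PowerSeries.X)

open PowerSeries

section Exponential

variable [CharZero R]

lemma expS_eq_rescale_exp (b : R) : expS b = rescale b (exp R) := by
  ext n
  simp [expS, coeff_rescale, coeff_exp, div_eq_mul_inv]

lemma expS_mul_expS (b c : R) : expS b * expS c = expS (b + c) := by
  simp only [expS_eq_rescale_exp, exp_mul_exp_eq_exp_add]

lemma rescale_expS (b c : R) : rescale c (expS b) = expS (b * c) := by
  simp only [expS_eq_rescale_exp, rescale_rescale]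

lemma expS_zero : expS (0 : R) = 1 := by
  rw [expS_eq_rescale_exp, rescale_zero_apply, constantCoeff_exp, map_one]

lemma expS_sub_expS_neg_ne_zero {a : R} (ha : a ≠ 0) : expS a - expS (-a) ≠ 0 := by
  intro h
  have h1 := congrArg (coeff 1) h
  simp [expS, ← two_mul, ha] at h1

end Exponential

lemma rescale_C {S : Type*} [CommSemiring S] (b c : S) : rescale c (C b) = C b := by
  ext n
  rcases eq_or_ne n 0 with rfl | hn <;> simp [coeff_rescale, coeff_C, *]

/-- `H = a t coth (a t)`. -/
def IsTCoth (a : R) (H : PowerSeries R) : Prop :=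
  H * (expS a - expS (-a)) = X * (C a * (expS a + expS (-a)))

lemma isDab_zero_iff {a : R} {H : PowerSeries R} :
    IsDab a 0 H ↔ (a ≠ 0 ∧ IsTCoth a H) ∨ (a = 0 ∧ H = 1) := by
  simp [IsDab, IsTCoth]

namespace IsTCoth

variable {a : R} {G H : PowerSeries R}

lemma neg (hH : IsTCoth a H) : IsTCoth (-a) H := by
  unfold IsTCoth at hH ⊢
  rw [neg_neg, map_neg]
  linear_combination -hH

variable [CharZero R]

lemma unique (ha : a ≠ 0) (hG : IsTCoth a G) (hH : IsTCoth a H) : G = H :=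
  mul_right_cancel₀ (expS_sub_expS_neg_ne_zero ha) (hG.trans hH.symm)

lemma rescale (hH : IsTCoth a H) (c : R) : IsTCoth (a * c) (PowerSeries.rescale c H) := by
  have h := congrArg (PowerSeries.rescale c) hH
  simp only [map_mul, map_sub, map_add, rescale_expS, rescale_X, rescale_C] at h
  rw [IsTCoth, ← neg_mul, h, map_mul]
  ring

lemma coeff_of_odd (ha : a ≠ 0) (hH : IsTCoth a H) (n : ℕ) (hn : Odd n) : coeff n H = 0 := by
  have hsymm : PowerSeries.rescale (-1) H = H := by
    refine unique ha ?_ hH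
    simpa using (hH.rescale (-1)).neg
  have h := congrArg (coeff n) hsymm
  rw [coeff_rescale, hn.neg_one_pow, neg_one_mul, neg_eq_iff_add_eq_zero, ← two_mul] at h
  exact (mul_eq_zero.1 h).resolve_left two_ne_zero

lemma constantCoeff_eq_one (ha : a ≠ 0) (hH : IsTCoth a H) : constantCoeff H = 1 := by
  have h := congrArg (coeff 1) hH
  rw [coeff_mul, Finset.Nat.sum_antidiagonal_eq_sum_range_succ_mk] at h
  simp [expS, Finset.sum_range_succ] at h
  have h' : (2 * a) * (constantCoeff H - 1) = 0 := by linear_combination h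
  exact sub_eq_zero.1 ((mul_eq_zero.1 h').resolve_left (mul_ne_zero two_ne_zero ha))

lemma coeff_two (ha : a ≠ 0) (hH : IsTCoth a H) : coeff 2 H = a ^ 2 / 3 := by
  have h := congrArg (coeff 3) hH
  rw [coeff_mul, Finset.Nat.sum_antidiagonal_eq_sum_range_succ_mk] at h
  simp [expS, Finset.sum_range_succ, Nat.factorial, hH.constantCoeff_eq_one ha] at h
  have h' : (2 * a) * (coeff 2 H - a ^ 2 / 3) = 0 := by linear_combination h
  exact sub_eq_zero.1 ((mul_eq_zero.1 h').resolve_left (mul_ne_zero two_ne_zero ha))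

end IsTCoth

section

variable [CharZero R] {a : R} {H : PowerSeries R}

lemma exists_isTCoth (ha : a ≠ 0) : ∃ H : PowerSeries R, IsTCoth a H := by
  obtain ⟨u, hu⟩ := X_dvd_iff.2 (show constantCoeff (expS a - expS (-a)) = 0 by simp [expS])
  have hu0 : constantCoeff u ≠ 0 := by
    have h := congrArg (coeff 1) hu
    simp [expS, ← two_mul] at h
    simpa [← h] using ha
  refine ⟨C a * (expS a + expS (-a)) * u⁻¹, ?_⟩
  rw [IsTCoth, hu]
  linear_combination (X * (C a * (expS a + expS (-a)))) * PowerSeries.mul_inv_cancel u hu0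

lemma IsDab.coeff_of_odd (hH : IsDab a 0 H) (n : ℕ) (hn : Odd n) : coeff n H = 0 := by
  rcases isDab_zero_iff.1 hH with ⟨ha, hH⟩ | ⟨-, rfl⟩
  · exact hH.coeff_of_odd ha n hn
  · simp [coeff_one, hn.pos.ne']

lemma IsDab.constantCoeff_eq_one (hH : IsDab a 0 H) : constantCoeff H = 1 := by
  rcases isDab_zero_iff.1 hH with ⟨ha, hH⟩ | ⟨-, rfl⟩
  · exact hH.constantCoeff_eq_one ha
  · exact map_one _

lemma exists_isDab_coeff_two (a : R) :
    ∃ H : PowerSeries R, IsDab a 0 H ∧ coeff 2 H = a ^ 2 / 3 := by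
  rcases eq_or_ne a 0 with rfl | ha
  · exact ⟨1, isDab_zero_iff.2 (Or.inr ⟨rfl, rfl⟩), by simp [coeff_one]⟩
  · obtain ⟨H, hH⟩ := exists_isTCoth ha
    exact ⟨H, isDab_zero_iff.2 (Or.inl ⟨ha, hH⟩), hH.coeff_two ha⟩

end

def doublingDefect (H : PowerSeries R) : PowerSeries R := H * rescale 2 H - H * H

lemma coeff_doublingDefect_succ {H : PowerSeries R} (h0 : constantCoeff H = 1) (m : ℕ) :
    coeff (m + 1) (doublingDefect H) = (2 ^ (m + 1) - 1) * coeff (m + 1) H +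
      ∑ k ∈ Finset.range m, coeff (k + 1) H * (2 ^ (m - k) - 1) * coeff (m - k) H := by
  rw [doublingDefect, ← mul_sub, coeff_mul, Finset.Nat.sum_antidiagonal_eq_sum_range_succ_mk,
    Finset.sum_range_succ', Finset.sum_range_succ]
  simp only [map_sub, coeff_rescale, ← coeff_zero_eq_constantCoeff_apply] at h0 ⊢
  simp only [h0, Nat.sub_zero, pow_zero, Nat.sub_self, mul_one, one_mul, sub_self, mul_zero,
    add_zero, Nat.add_sub_add_right]
  rw [add_comm]
  congr 1
  · ring
  · exact Finset.sum_congr rfl fun k _ => by ring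

lemma eq_of_doublingDefect [CharZero R] {G H : PowerSeries R}
    (hG0 : constantCoeff G = 1) (hH0 : constantCoeff H = 1) (h2 : coeff 2 G = coeff 2 H)
    (hG : ∀ n ≠ 2, coeff n (doublingDefect G) = 0)
    (hH : ∀ n ≠ 2, coeff n (doublingDefect H) = 0) : G = H := by
  ext n
  induction n using Nat.strong_induction_on with | _ n ih
  rcases n with _ | m
  · simp [hG0, hH0]
  rcases eq_or_ne (m + 1) 2 with h | h
  · rwa [h]
  have hsum : ∑ k ∈ Finset.range m, coeff (k + 1) G * (2 ^ (m - k) - 1) * coeff (m - k) G =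
      ∑ k ∈ Finset.range m, coeff (k + 1) H * (2 ^ (m - k) - 1) * coeff (m - k) H := by
    refine Finset.sum_congr rfl fun k hk => ?_
    have hk := Finset.mem_range.1 hk
    rw [ih (k + 1) (by omega), ih (m - k) (by omega)]
  have hpow : (2 : R) ^ (m + 1) - 1 ≠ 0 :=
    sub_ne_zero.2 (by exact_mod_cast (Nat.one_lt_two_pow m.succ_ne_zero).ne')
  have hGm := coeff_doublingDefect_succ hG0 m
  have hHm := coeff_doublingDefect_succ hH0 m
  rw [hG _ h] at hGm
  rw [hH _ h, ← hsum] at hHm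
  exact mul_left_cancel₀ hpow (by linear_combination hHm - hGm)

lemma coeff_zscale (w : R) (f : LaurentSeries R) (k : ℤ) :
    (zscale w f).coeff k = w ^ k * f.coeff k := rfl

lemma coeff_FH (H : PowerSeries R) (k : ℤ) :
    (FH H).coeff k = (HahnSeries.ofPowerSeries ℤ R H).coeff (k + 1) := by
  simpa [FH] using HahnSeries.coeff_single_mul_add (r := (1 : R))
    (x := HahnSeries.ofPowerSeries ℤ R H) (a := k + 1) (b := -1)

lemma zscale_FH {w : R} (hw : w ≠ 0) (H : PowerSeries R) :
    zscale w (FH H) = HahnSeries.C w⁻¹ * FH (rescale w H) := by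
  ext k
  rw [HahnSeries.C_mul_eq_smul, HahnSeries.coeff_smul, coeff_zscale, coeff_FH, coeff_FH,
    PowerSeries.coeff_coe, PowerSeries.coeff_coe]
  split_ifs with hk
  · simp
  · rw [coeff_rescale, smul_eq_mul, ← mul_assoc, ← zpow_natCast,
      Int.natAbs_of_nonneg (not_lt.1 hk), zpow_add_one₀ hw]
    field_simp

/-- `F_H(p t)`. -/
def scaledFH (H : PowerSeries R) (p : ℤ) : LaurentSeries R := zscale (p : R) (FH H)

lemma SH_eq_sum_prod_scaledFH (H : PowerSeries R) {n : ℕ} (w : Fin (n + 1) → ℤ) :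
    SH H w = ∑ i, ∏ j ∈ Finset.univ.erase i, scaledFH H (w j - w i) := rfl

lemma scaledFH_neg {H : PowerSeries R} (heven : ∀ n : ℕ, Odd n → coeff n H = 0) (p : ℤ) :
    scaledFH H (-p) = -scaledFH H p := by
  ext k
  simp only [scaledFH, coeff_zscale, HahnSeries.coeff_neg, Int.cast_neg]
  rcases Int.even_or_odd k with hk | hk
  · have hFk : (FH H).coeff k = 0 := by
      rw [coeff_FH, PowerSeries.coeff_coe]
      split_ifs
      · rfl
      · exact heven _ (Int.natAbs_odd.2 hk.add_one)
    simp [hFk]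
  · rw [hk.neg_zpow, neg_mul]

lemma SH_fin_two_eq_zero {H : PowerSeries R} (heven : ∀ n : ℕ, Odd n → coeff n H = 0)
    (w : Fin 2 → ℤ) : SH H w = 0 := by
  have hsymm : w 0 - w 1 = -(w 1 - w 0) := by ring
  rw [SH_eq_sum_prod_scaledFH, Fin.sum_univ_two, show Finset.univ.erase (0 : Fin 2) = {1} by decide,
    show Finset.univ.erase (1 : Fin 2) = {0} by decide, Finset.prod_singleton,
    Finset.prod_singleton, hsymm, scaledFH_neg heven, add_neg_cancel]

lemma SH_fin_three {H : PowerSeries R} (heven : ∀ n : ℕ, Odd n → coeff n H = 0)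
    {w : Fin 3 → ℤ} {u v : ℤ} (hu : w 1 - w 0 = u) (hv : w 2 - w 1 = v) :
    SH H w = scaledFH H u * scaledFH H (u + v) - scaledFH H u * scaledFH H v +
      scaledFH H (u + v) * scaledFH H v := by
  have h20 : w 2 - w 0 = u + v := by rw [← hu, ← hv]; ring
  have h01 : w 0 - w 1 = -u := by rw [← hu]; ring
  have h02 : w 0 - w 2 = -(u + v) := by rw [← h20]; ring
  have h12 : w 1 - w 2 = -v := by rw [← hv]; ring
  rw [SH_eq_sum_prod_scaledFH, Fin.sum_univ_three, show Finset.univ.erase (0 : Fin 3) = {1, 2} by decide,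
    show Finset.univ.erase (1 : Fin 3) = {0, 2} by decide,
    show Finset.univ.erase (2 : Fin 3) = {0, 1} by decide, Finset.prod_pair (by decide),
    Finset.prod_pair (by decide), Finset.prod_pair (by decide), hu, h20, h01, h12, h02, hv,
    scaledFH_neg heven, scaledFH_neg heven, scaledFH_neg heven]
  ring

/-- The addition formula `coth (α + β) (coth α + coth β) = 1 + coth α coth β`, for
`x = e^α`, `y = e^β`, `f = a coth α`, `g = a coth β` and `h = a coth (α + β)`. -/
lemma coth_identity {K : Type*} [Field K] {a x y f g h : K} (hx : x - x⁻¹ ≠ 0)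
    (hy : y - y⁻¹ ≠ 0) (hxy : x * y - (x * y)⁻¹ ≠ 0) (hf : f * (x - x⁻¹) = a * (x + x⁻¹))
    (hg : g * (y - y⁻¹) = a * (y + y⁻¹)) (hh : h * (x * y - (x * y)⁻¹) = a * (x * y + (x * y)⁻¹)) :
    f * h - f * g + h * g = a ^ 2 := by
  have hx0 : x ≠ 0 := by rintro rfl; simp at hx
  have hy0 : y ≠ 0 := by rintro rfl; simp at hy
  have hI : (x + x⁻¹) * (x * y + (x * y)⁻¹) * (y - y⁻¹) -
      (x + x⁻¹) * (y + y⁻¹) * (x * y - (x * y)⁻¹) + (x * y + (x * y)⁻¹) * (y + y⁻¹) * (x - x⁻¹) =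
        (x - x⁻¹) * (y - y⁻¹) * (x * y - (x * y)⁻¹) := by
    field_simp
    ring
  set sx := x - x⁻¹
  set sy := y - y⁻¹
  set sxy := x * y - (x * y)⁻¹
  set cx := x + x⁻¹
  set cy := y + y⁻¹
  set cxy := x * y + (x * y)⁻¹
  refine mul_right_cancel₀ (mul_ne_zero (mul_ne_zero hx hy) hxy) ?_
  linear_combination (h * sxy * sy - g * sy * sxy) * hf + (a * cx * sy + g * sy * sx) * hh +
    (a * cxy * sx - a * cx * sxy) * hg + a ^ 2 * hI

section Laurent

variable [CharZero R]

def expL (b : R) : LaurentSeries R := HahnSeries.ofPowerSeries ℤ R (expS b)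

lemma expL_add (b c : R) : expL (b + c) = expL b * expL c := by
  rw [expL, expL, expL, ← map_mul, expS_mul_expS]

lemma expL_neg (b : R) : expL (-b) = (expL b)⁻¹ :=
  eq_inv_of_mul_eq_one_right (by rw [← expL_add, add_neg_cancel, expL, expS_zero, map_one])

lemma expL_sub_inv_ne_zero {b : R} (hb : b ≠ 0) : expL b - (expL b)⁻¹ ≠ 0 := by
  rw [← expL_neg, expL, expL, ← map_sub]
  exact (map_ne_zero_iff _ HahnSeries.ofPowerSeries_injective).2 (expS_sub_expS_neg_ne_zero hb)

lemma FH_mul_of_isTCoth {b : R} {G : PowerSeries R} (hG : IsTCoth b G) :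
    FH G * (expL b - (expL b)⁻¹) = HahnSeries.C b * (expL b + (expL b)⁻¹) := by
  have h := congrArg (HahnSeries.ofPowerSeries ℤ R) hG
  simp only [map_mul, map_sub, map_add, HahnSeries.ofPowerSeries_X, HahnSeries.ofPowerSeries_C]
    at h
  rw [← expL_neg, FH, mul_assoc, expL, expL, h, ← mul_assoc, HahnSeries.single_mul_single]
  simp

lemma scaledFH_mul_of_isTCoth {a : R} {H : PowerSeries R} (hH : IsTCoth a H) {p : ℤ}
    (hp : p ≠ 0) : scaledFH H p * (expL (a * p) - (expL (a * p))⁻¹) =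
      HahnSeries.C a * (expL (a * p) + (expL (a * p))⁻¹) := by
  have hp' : (p : R) ≠ 0 := Int.cast_ne_zero.2 hp
  rw [scaledFH, zscale_FH hp', mul_assoc, FH_mul_of_isTCoth (hH.rescale p), ← mul_assoc,
    ← map_mul, mul_comm a, inv_mul_cancel_left₀ hp']

lemma IsDab.scaledFH_identity {a : R} {H : PowerSeries R} (hH : IsDab a 0 H) {u v : ℤ}
    (hu : u ≠ 0) (hv : v ≠ 0) (huv : u + v ≠ 0) :
    scaledFH H u * scaledFH H (u + v) - scaledFH H u * scaledFH H v +
      scaledFH H (u + v) * scaledFH H v = HahnSeries.C (a ^ 2) := by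
  rcases isDab_zero_iff.1 hH with ⟨ha, hH⟩ | ⟨rfl, rfl⟩
  · have hxy : expL (a * (u + v : ℤ)) = expL (a * u) * expL (a * v) := by
      rw [Int.cast_add, mul_add, expL_add]
    have hne : ∀ p : ℤ, p ≠ 0 → expL (a * p) - (expL (a * p))⁻¹ ≠ 0 := fun p hp =>
      expL_sub_inv_ne_zero (mul_ne_zero ha (Int.cast_ne_zero.2 hp))
    have hne' := hne _ huv
    have key := scaledFH_mul_of_isTCoth hH huv
    rw [hxy] at hne' key
    rw [map_pow]
    exact coth_identity (hne u hu) (hne v hv) hne' (scaledFH_mul_of_isTCoth hH hu)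
      (scaledFH_mul_of_isTCoth hH hv) key
  · have hF : ∀ p : ℤ, p ≠ 0 →
        scaledFH (1 : PowerSeries R) p = HahnSeries.C (p : R)⁻¹ * HahnSeries.single (-1) 1 :=
      fun p hp => by rw [scaledFH, zscale_FH (Int.cast_ne_zero.2 hp), map_one (rescale _), FH,
        map_one (HahnSeries.ofPowerSeries ℤ R), mul_one]
    have hC : ∀ p : ℤ, p ≠ 0 → (HahnSeries.C (p : R) : LaurentSeries R) ≠ 0 := fun p hp =>
      (map_ne_zero_iff _ HahnSeries.C_injective).2 (Int.cast_ne_zero.2 hp)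
    have hCu := hC u hu
    have hCv := hC v hv
    have hCuv := hC _ huv
    rw [Int.cast_add, map_add] at hCuv
    rw [hF u hu, hF v hv, hF _ huv, Int.cast_add, map_inv₀, map_inv₀, map_inv₀, map_add,
      zero_pow two_ne_zero, map_zero]
    field_simp
    ring

end Laurent

section Rigidity

variable [CharZero R]

lemma algRigid_two_of_isDab {a : R} {H : PowerSeries R} (hH : IsDab a 0 H) : AlgRigid H 2 := by
  intro m hm1 hm2 w hw k hk
  interval_cases m
  · rw [SH_fin_two_eq_zero hH.coeff_of_odd w, HahnSeries.coeff_zero]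
  · have hne : ∀ i j : Fin 3, i ≠ j → w j - w i ≠ 0 := fun i j hij h =>
      hij (hw (sub_eq_zero.1 h)).symm
    have huv : w 1 - w 0 + (w 2 - w 1) ≠ 0 := by
      rw [sub_add_sub_cancel']
      exact hne 0 2 (by decide)
    rw [SH_fin_three hH.coeff_of_odd rfl rfl,
      hH.scaledFH_identity (hne 0 1 (by decide)) (hne 1 2 (by decide)) huv,
      HahnSeries.C_apply, HahnSeries.coeff_single_of_ne hk]

lemma SH_zero_one_two {H : PowerSeries R} (heven : ∀ n : ℕ, Odd n → coeff n H = 0) :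
    SH H ![0, 1, 2] =
      HahnSeries.single (-2) 1 * HahnSeries.ofPowerSeries ℤ R (doublingDefect H) := by
  have h1 : scaledFH H 1 = FH H := by
    rw [scaledFH, Int.cast_one, zscale_FH one_ne_zero, rescale_one]
    simp
  have h2 : scaledFH H (1 + 1) = HahnSeries.C 2⁻¹ * FH (rescale 2 H) := by
    rw [scaledFH, zscale_FH (by norm_num)]
    norm_num
  have hT : HahnSeries.single (-1) 1 * HahnSeries.single (-1) 1 =
      HahnSeries.single (-2) (1 : R) := by
    rw [HahnSeries.single_mul_single]
    norm_num
  have hC : (HahnSeries.C (2⁻¹ : R) : LaurentSeries R) * 2 = 1 := by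
    rw [← map_ofNat HahnSeries.C 2, ← map_mul, inv_mul_cancel₀ two_ne_zero, map_one]
  rw [SH_fin_three heven (u := 1) (v := 1) rfl rfl, h1, h2, FH, FH, doublingDefect, map_sub,
    map_mul, map_mul]
  set T : LaurentSeries R := HahnSeries.single (-1) 1
  set L := HahnSeries.ofPowerSeries ℤ R
  linear_combination (T * T * L H * L (rescale 2 H)) * hC + (L H * L (rescale 2 H) - L H * L H) * hT

lemma coeff_doublingDefect_eq_zero {H : PowerSeries R} (heven : ∀ n : ℕ, Odd n → coeff n H = 0)
    (hH : AlgRigid H 2) {n : ℕ} (hn : n ≠ 2) : coeff n (doublingDefect H) = 0 := by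
  have h := hH 2 one_le_two le_rfl ![0, 1, 2] (by decide) (n - 2) (by omega)
  rwa [SH_zero_one_two heven, sub_eq_add_neg, HahnSeries.coeff_single_mul_add, one_mul,
    PowerSeries.coeff_coe, if_neg (by omega), Int.natAbs_natCast] at h

end Rigidity

/-- Theorem 4.2, complex case: an even `H ∈ ℂ[[t]]` with constant term 1 is
2-algebraically rigid iff `H = D_{a,0}` for some `a ∈ ℂ` (formally `H = at·coth(at)`,
with `H = 1` for `a = 0`). -/
theorem even_algRigid_two_iff (H : PowerSeries ℂ)
    (hH : PowerSeries.constantCoeff H = 1)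
    (heven : ∀ n : ℕ, Odd n → PowerSeries.coeff n H = 0) :
    AlgRigid H 2 ↔ ∃ a : ℂ, IsDab a 0 H := by
  refine ⟨fun hrig => ?_, fun ⟨a, hD⟩ => algRigid_two_of_isDab hD⟩
  obtain ⟨a, ha⟩ := IsAlgClosed.exists_pow_nat_eq (3 * coeff 2 H) two_pos
  obtain ⟨D, hD, hD2⟩ := exists_isDab_coeff_two a
  have hDH : D = H := eq_of_doublingDefect hD.constantCoeff_eq_one hH (by rw [hD2, ha]; ring)
    (fun _ hn => coeff_doublingDefect_eq_zero hD.coeff_of_odd (algRigid_two_of_isDab hD) hn)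
    (fun _ hn => coeff_doublingDefect_eq_zero heven hrig hn)
  exact ⟨a, hDH ▸ hD⟩

end RigidGenus
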